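/- Let p ≥ 1, n = 2p, and let k_1, k_2, k_3, k_4 be integers with 1 ≤ k_i ≤ p and k_1 + k_4 = k_2 + k_3. For i = 1,2,3,4 let A_i be a p×p (0,1)-matrix having exactly k_i ones in every row and every column, and let A = [[A_1, A_2],[A_3, A_4]] be the n×n block matrix with A_1 in the top-left, A_2 top-right, A_3 bottom-left, A_4 bottom-right. Define the n×n matrix X' = [x'_ij] with x'_ij = 0 when a_ij = 0, and, when a_ij = 1: x'_ij = k_4 if i,j ≤ p; x'_ij = k_3 if i ≤ p < j; x'_ij = k_2 if j ≤ p < i; and x'_ij = k_1 if i,j > p. Then X = (1/(k_1 k_4 + k_2 k_3)) · X' is an RCDS doubly stochastic matrix with ξ(X) = ξ(A), and A is the pattern of an RCDS doubly stochastic matrix. -/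
import Mathlib


/-- `X` is doubly stochastic (over an arbitrary finite index type). -/
def DoublyStochastic {ι : Type*} [Fintype ι] (X : Matrix ι ι ℝ) : Prop :=
  (∀ i j, 0 ≤ X i j) ∧ (∀ i, ∑ j, X i j = 1) ∧ (∀ j, ∑ i, X i j = 1)

/-- `X` has restricted constant diagonal sums. -/
def RCDS {ι : Type*} [Fintype ι] (X : Matrix ι ι ℝ) : Prop :=
  ∀ σ τ : Equiv.Perm ι, (∀ i, 0 < X i (σ i)) → (∀ i, 0 < X i (τ i)) →
    ∑ i, X i (σ i) = ∑ i, X i (τ i)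

/-- Let `n = 2p` and `k₁ + k₄ = k₂ + k₃` with `1 ≤ kᵢ ≤ p`.  If each `p × p`
block `Aᵢ` is a (0,1)-matrix with exactly `kᵢ` ones in every row and column, and
`A = [[A₁,A₂],[A₃,A₄]]` (indexed by `Fin p ⊕ Fin p`), then the matrix
`X = (1/(k₁k₄ + k₂k₃)) · X'`, where `X'` has entry `k₄`, `k₃`, `k₂`, `k₁` at the
ones of `A₁`, `A₂`, `A₃`, `A₄` respectively and `0` elsewhere, is an RCDS doubly
stochastic matrix with the same zero pattern as `A`; in particular `A` is the
pattern of an RCDS doubly stochastic matrix. -/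
theorem rcds_two_block_class (p : ℕ) (hp : 1 ≤ p)
    (k₁ k₂ k₃ k₄ : ℕ)
    (hk₁ : 1 ≤ k₁) (hk₂ : 1 ≤ k₂) (hk₃ : 1 ≤ k₃) (hk₄ : 1 ≤ k₄)
    (hk₁p : k₁ ≤ p) (hk₂p : k₂ ≤ p) (hk₃p : k₃ ≤ p) (hk₄p : k₄ ≤ p)
    (hsum : k₁ + k₄ = k₂ + k₃)
    (A₁ A₂ A₃ A₄ : Matrix (Fin p) (Fin p) ℝ)
    (h₁01 : ∀ i j, A₁ i j = 0 ∨ A₁ i j = 1)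
    (h₂01 : ∀ i j, A₂ i j = 0 ∨ A₂ i j = 1)
    (h₃01 : ∀ i j, A₃ i j = 0 ∨ A₃ i j = 1)
    (h₄01 : ∀ i j, A₄ i j = 0 ∨ A₄ i j = 1)
    (h₁row : ∀ i, ∑ j, A₁ i j = (k₁ : ℝ)) (h₁col : ∀ j, ∑ i, A₁ i j = (k₁ : ℝ))
    (h₂row : ∀ i, ∑ j, A₂ i j = (k₂ : ℝ)) (h₂col : ∀ j, ∑ i, A₂ i j = (k₂ : ℝ))
    (h₃row : ∀ i, ∑ j, A₃ i j = (k₃ : ℝ)) (h₃col : ∀ j, ∑ i, A₃ i j = (k₃ : ℝ))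
    (h₄row : ∀ i, ∑ j, A₄ i j = (k₄ : ℝ)) (h₄col : ∀ j, ∑ i, A₄ i j = (k₄ : ℝ)) :
    DoublyStochastic
      ((((k₁ : ℝ) * k₄ + (k₂ : ℝ) * k₃)⁻¹) •
        Matrix.fromBlocks ((k₄ : ℝ) • A₁) ((k₃ : ℝ) • A₂)
          ((k₂ : ℝ) • A₃) ((k₁ : ℝ) • A₄)) ∧
    RCDS
      ((((k₁ : ℝ) * k₄ + (k₂ : ℝ) * k₃)⁻¹) •
        Matrix.fromBlocks ((k₄ : ℝ) • A₁) ((k₃ : ℝ) • A₂)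
          ((k₂ : ℝ) • A₃) ((k₁ : ℝ) • A₄)) ∧
    (∀ i j, ((((k₁ : ℝ) * k₄ + (k₂ : ℝ) * k₃)⁻¹) •
        Matrix.fromBlocks ((k₄ : ℝ) • A₁) ((k₃ : ℝ) • A₂)
          ((k₂ : ℝ) • A₃) ((k₁ : ℝ) • A₄)) i j = 0 ↔
        Matrix.fromBlocks A₁ A₂ A₃ A₄ i j = 0) ∧
    (∃ X : Matrix (Fin p ⊕ Fin p) (Fin p ⊕ Fin p) ℝ,
      DoublyStochastic X ∧ RCDS X ∧
      (∀ i j, X i j = 0 ↔ Matrix.fromBlocks A₁ A₂ A₃ A₄ i j = 0)) := by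
  set c : ℝ := (k₁ : ℝ) * k₄ + (k₂ : ℝ) * k₃ with hc_def
  set X : Matrix (Fin p ⊕ Fin p) (Fin p ⊕ Fin p) ℝ :=
    c⁻¹ • Matrix.fromBlocks ((k₄ : ℝ) • A₁) ((k₃ : ℝ) • A₂)
          ((k₂ : ℝ) • A₃) ((k₁ : ℝ) • A₄) with hX
  have h1R : (1 : ℝ) ≤ (k₁ : ℝ) := by exact_mod_cast hk₁
  have h2R : (1 : ℝ) ≤ (k₂ : ℝ) := by exact_mod_cast hk₂
  have h3R : (1 : ℝ) ≤ (k₃ : ℝ) := by exact_mod_cast hk₃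
  have h4R : (1 : ℝ) ≤ (k₄ : ℝ) := by exact_mod_cast hk₄
  have hsumR : (k₁ : ℝ) + k₄ = (k₂ : ℝ) + k₃ := by exact_mod_cast hsum
  have hc : 0 < c := by nlinarith
  have hci : 0 ≤ c⁻¹ := le_of_lt (inv_pos.mpr hc)
  have hXll : ∀ a b, X (Sum.inl a) (Sum.inl b) = c⁻¹ * ((k₄ : ℝ) * A₁ a b) := by
    intro a b; simp [hX, Matrix.smul_apply, Matrix.fromBlocks_apply₁₁, smul_eq_mul]
  have hXlr : ∀ a b, X (Sum.inl a) (Sum.inr b) = c⁻¹ * ((k₃ : ℝ) * A₂ a b) := by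
    intro a b; simp [hX, Matrix.smul_apply, Matrix.fromBlocks_apply₁₂, smul_eq_mul]
  have hXrl : ∀ a b, X (Sum.inr a) (Sum.inl b) = c⁻¹ * ((k₂ : ℝ) * A₃ a b) := by
    intro a b; simp [hX, Matrix.smul_apply, Matrix.fromBlocks_apply₂₁, smul_eq_mul]
  have hXrr : ∀ a b, X (Sum.inr a) (Sum.inr b) = c⁻¹ * ((k₁ : ℝ) * A₄ a b) := by
    intro a b; simp [hX, Matrix.smul_apply, Matrix.fromBlocks_apply₂₂, smul_eq_mul]
  -- double stochasticity
  have hDS : DoublyStochastic X := by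
    refine ⟨?_, ?_, ?_⟩
    · rintro (a | a) (b | b)
      · rw [hXll]
        rcases h₁01 a b with h | h <;> rw [h] <;> positivity
      · rw [hXlr]
        rcases h₂01 a b with h | h <;> rw [h] <;> positivity
      · rw [hXrl]
        rcases h₃01 a b with h | h <;> rw [h] <;> positivity
      · rw [hXrr]
        rcases h₄01 a b with h | h <;> rw [h] <;> positivity
    · rintro (a | a)
      · rw [Fintype.sum_sum_type]
        simp only [hXll, hXlr, ← Finset.mul_sum, h₁row, h₂row]
        field_simp [hc_def]; ring
      · rw [Fintype.sum_sum_type]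
        simp only [hXrl, hXrr, ← Finset.mul_sum, h₃row, h₄row]
        field_simp [hc_def]; ring
    · rintro (b | b)
      · rw [Fintype.sum_sum_type]
        simp only [hXll, hXrl, ← Finset.mul_sum, h₁col, h₃col]
        field_simp [hc_def]; ring
      · rw [Fintype.sum_sum_type]
        simp only [hXlr, hXrr, ← Finset.mul_sum, h₂col, h₄col]
        field_simp [hc_def]; ring
  -- RCDS
  have hRCDS : RCDS X := by
    set f : Fin p ⊕ Fin p → ℝ := Sum.elim (fun _ => 0) (fun _ => (k₂ : ℝ) - k₄) with hf
    set g : Fin p ⊕ Fin p → ℝ := Sum.elim (fun _ => (k₄ : ℝ)) (fun _ => (k₃ : ℝ)) with hg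
    have hkey : ∀ i j, 0 < X i j → X i j = c⁻¹ * (f i + g j) := by
      rintro (a | a) (b | b) hpos
      · rcases h₁01 a b with h | h
        · rw [hXll, h] at hpos; simp at hpos
        · rw [hXll, h]; simp [hf, hg]
      · rcases h₂01 a b with h | h
        · rw [hXlr, h] at hpos; simp at hpos
        · rw [hXlr, h]; simp [hf, hg]
      · rcases h₃01 a b with h | h
        · rw [hXrl, h] at hpos; simp at hpos
        · rw [hXrl, h]; simp [hf, hg]
      · rcases h₄01 a b with h | h
        · rw [hXrr, h] at hpos; simp at hpos
        · rw [hXrr, h]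
          have hk : (k₁ : ℝ) = (k₂ : ℝ) - k₄ + k₃ := by linarith
          simp only [hf, hg, Sum.elim_inr, mul_one, hk]
    intro σ τ hσ hτ
    have hgen : ∀ ρ : Equiv.Perm (Fin p ⊕ Fin p), (∀ i, 0 < X i (ρ i)) →
        ∑ i, X i (ρ i) = c⁻¹ * (∑ i, f i + ∑ i, g i) := by
      intro ρ hρ
      calc ∑ i, X i (ρ i) = ∑ i, c⁻¹ * (f i + g (ρ i)) :=
            Finset.sum_congr rfl fun i _ => hkey i (ρ i) (hρ i)
        _ = c⁻¹ * (∑ i, f i + ∑ i, g (ρ i)) := by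
            rw [← Finset.mul_sum, Finset.sum_add_distrib]
        _ = c⁻¹ * (∑ i, f i + ∑ i, g i) := by rw [Equiv.sum_comp ρ g]
    rw [hgen σ hσ, hgen τ hτ]
  -- zero pattern
  have hpat : ∀ i j, X i j = 0 ↔ Matrix.fromBlocks A₁ A₂ A₃ A₄ i j = 0 := by
    have hcne : c⁻¹ ≠ 0 := inv_ne_zero hc.ne'
    have h1ne : (k₁ : ℝ) ≠ 0 := by positivity
    have h2ne : (k₂ : ℝ) ≠ 0 := by positivity
    have h3ne : (k₃ : ℝ) ≠ 0 := by positivity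
    have h4ne : (k₄ : ℝ) ≠ 0 := by positivity
    rintro (a | a) (b | b)
    · rw [hXll]; simp [Matrix.fromBlocks_apply₁₁, mul_eq_zero, hcne, h4ne]
    · rw [hXlr]; simp [Matrix.fromBlocks_apply₁₂, mul_eq_zero, hcne, h3ne]
    · rw [hXrl]; simp [Matrix.fromBlocks_apply₂₁, mul_eq_zero, hcne, h2ne]
    · rw [hXrr]; simp [Matrix.fromBlocks_apply₂₂, mul_eq_zero, hcne, h1ne]
  exact ⟨hDS, hRCDS, hpat, X, hDS, hRCDS, hpat⟩
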